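/- Suppose T is S-increasing and (d,S;λ)-contractive for λ ∈ (0,1), and x0 satisfies x0 S^ω T x0. Then the equivalence class X0 of x0 is T-invariant, and T restricted to X0 is a λ-contraction with respect to the chain metric e: e(Tu,Tv) ≤ λ e(u,v) for all u,v ∈ X0. -/

import Mathlib

/-- Length of a finite chain: sum of distances of consecutive elements. -/
def chainLen {X : Type*} [MetricSpace X] : List X → ℝ
  | [] => 0
  | [_] => 0
  | a :: b :: l => dist a b + chainLen (b :: l)

/-- `l` is an S-chain from `x` to `y`. -/
def IsSChain {X : Type*} (S : X → X → Prop) (x y : X) (l : List X) : Prop :=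
  l.head? = some x ∧ l.getLast? = some y ∧ l.Chain' S

/-- The chain metric: infimum of d-lengths of S-chains from x to y. -/
noncomputable def chainDist {X : Type*} [MetricSpace X] (S : X → X → Prop)
    (x y : X) : ℝ :=
  sInf {r | ∃ l : List X, IsSChain S x y l ∧ r = chainLen l}

lemma chainLen_nonneg {X : Type*} [MetricSpace X] : ∀ l : List X, 0 ≤ chainLen l
  | [] => le_refl _
  | [_] => le_refl _
  | a :: b :: l => by
      have := chainLen_nonneg (b :: l)
      simp only [chainLen]
      positivity

lemma exists_chain {X : Type*} (S : X → X → Prop) {x y : X}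
    (h : Relation.ReflTransGen S x y) : ∃ l, IsSChain S x y l := by
  induction h with
  | refl => exact ⟨[x], rfl, rfl, List.isChain_singleton x⟩
  | @tail b c hb hbc ih =>
    obtain ⟨l, h1, h2, h3⟩ := ih
    refine ⟨l ++ [c], ?_, ?_, ?_⟩
    · cases l with
      | nil => simp at h1
      | cons a t => simpa using h1
    · simp
    · refine List.isChain_append.mpr ?_
      refine ⟨h3, List.isChain_singleton c, ?_⟩
      intro p hp q hq
      rw [h2] at hp
      simp at hp hq
      subst hp; subst hq; exact hbc

lemma chainLen_map_le {X : Type*} [MetricSpace X] (S : X → X → Prop) (T : X → X)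
    (lam : ℝ) (hcontr : ∀ x y, S x y → dist (T x) (T y) ≤ lam * dist x y) :
    ∀ l : List X, l.Chain' S → chainLen (l.map T) ≤ lam * chainLen l
  | [] => fun _ => by simp [chainLen]
  | [_] => fun _ => by simp [chainLen]
  | a :: b :: l => fun h => by
      replace h := List.isChain_cons_cons.mp h
      have ih := chainLen_map_le S T lam hcontr (b :: l) h.2
      simp only [List.map_cons, chainLen, mul_add]
      exact add_le_add (hcontr a b h.1) ih

/-- If T is S-increasing and (d,S;λ)-contractive and x0 S^ω T x0, then X0 is
T-invariant and T restricted to X0 is a λ-contraction for the chain metric. -/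
theorem stmt_11 {X : Type*} [MetricSpace X] (S : X → X → Prop)
    (hrefl : ∀ x, S x x) (hsymm : ∀ x y, S x y → S y x)
    (T : X → X) (lam : ℝ) (hlam0 : 0 < lam) (hlam1 : lam < 1)
    (hincr : ∀ x y, S x y → S (T x) (T y))
    (hcontr : ∀ x y, S x y → dist (T x) (T y) ≤ lam * dist x y)
    (x0 : X) (hprog : Relation.ReflTransGen S x0 (T x0)) :
    (∀ y, Relation.ReflTransGen S x0 y → Relation.ReflTransGen S x0 (T y)) ∧
    (∀ u v, Relation.ReflTransGen S x0 u → Relation.ReflTransGen S x0 v →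
      chainDist S (T u) (T v) ≤ lam * chainDist S u v) := by
  have hmapR : ∀ {x y : X}, Relation.ReflTransGen S x y →
      Relation.ReflTransGen S (T x) (T y) := by
    intro x y h
    induction h with
    | refl => exact .refl
    | tail _ hbc ih => exact ih.tail (hincr _ _ hbc)
  have hinv : ∀ y, Relation.ReflTransGen S x0 y → Relation.ReflTransGen S x0 (T y) := by
    intro y hy
    exact hprog.trans (hmapR hy)
  refine ⟨hinv, fun u v hu hv => ?_⟩
  have hsym : Symmetric (Relation.ReflTransGen S) :=
    fun x y h => (@Relation.ReflTransGen.stdSymm _ _ ⟨fun x y => hsymm x y⟩).symm x y h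
  have huv : Relation.ReflTransGen S u v := (hsym hu).trans hv
  set A := {r | ∃ l : List X, IsSChain S (T u) (T v) l ∧ r = chainLen l}
  set B := {r | ∃ l : List X, IsSChain S u v l ∧ r = chainLen l}
  have hBne : B.Nonempty := by
    obtain ⟨l, hl⟩ := exists_chain S huv
    exact ⟨chainLen l, l, hl, rfl⟩
  have hAbdd : BddBelow A := ⟨0, fun r ⟨l, _, hr⟩ => hr ▸ chainLen_nonneg l⟩
  have key : ∀ b ∈ B, sInf A ≤ lam * b := by
    rintro b ⟨l, ⟨h1, h2, h3⟩, rfl⟩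
    have hmem : chainLen (l.map T) ∈ A := by
      refine ⟨l.map T, ⟨?_, ?_, ?_⟩, rfl⟩
      · rw [List.head?_map, h1]; rfl
      · rw [List.getLast?_map, h2]; rfl
      · exact List.isChain_map_of_isChain T (fun a b h => hincr a b h) h3
    exact (csInf_le hAbdd hmem).trans (chainLen_map_le S T lam hcontr l h3)
  show sInf A ≤ lam * sInf B
  rw [mul_comm, ← div_le_iff₀ hlam0]
  exact le_csInf hBne fun b hb => by
    rw [div_le_iff₀ hlam0, mul_comm]; exact key b hb
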